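/- arXiv:2005.08280 — 7 statements merged into one kernel-verified Lean document; each statement's English description precedes it below -/
import Mathlib

section
/- Let n ≥ 2 be an integer and let f : ℝ^{n−1} → ℝ be a C^∞ function which is algebraic, in the sense that there exists a polynomial P in n real variables, not identically zero, such that P(x₁,…,x_{n−1}, f(x₁,…,x_{n−1})) = 0 for every (x₁,…,x_{n−1}) ∈ ℝ^{n−1}. Then there exists a polynomial Q in n−1 real variables, not identically zero, such that Q(x̄₁,…,x̄_{n−1}) = 0 for every point x̄ ∈ ℝ^{n−1} at which f(x̄) = 0 and the gradient ∇f(x̄) ≠ 0. -/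
/-!
Split off the last variable: `P = yᵏ · P₁(x, y)` with `P₁(x, 0) ≢ 0`, and take `Q(x) = P₁(x, 0)`.
Wherever `f ≠ 0` the identity `P(x, f x) = 0` forces `P₁(x, f x) = 0`. A zero `x̄` of `f` with
nonzero derivative is a limit of points where `f ≠ 0` (otherwise `f` vanishes near `x̄`), and `f`
is continuous at `x̄`, so `Q(x̄) = P₁(x̄, f x̄) = 0` by continuity.
-/

theorem Polynomial.exists_eq_X_pow_mul_coeff_zero_ne_zero {R : Type*} [CommRing R]
    (p : Polynomial R) (hp : p ≠ 0) :
    ∃ (k : ℕ) (q : Polynomial R), p = Polynomial.X ^ k * q ∧ q.coeff 0 ≠ 0 := by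
  obtain ⟨q, hpq, hq⟩ := p.exists_eq_pow_rootMultiplicity_mul_and_not_dvd hp 0
  rw [map_zero, sub_zero] at hpq hq
  exact ⟨_, q, hpq, mt Polynomial.X_dvd_iff.2 hq⟩

theorem mem_closure_setOf_ne_of_fderiv_ne_zero {𝕜 E F : Type*} [NontriviallyNormedField 𝕜]
    [NormedAddCommGroup E] [NormedSpace 𝕜 E] [NormedAddCommGroup F] [NormedSpace 𝕜 F]
    {f : E → F} {x : E} (c : F) (h : fderiv 𝕜 f x ≠ 0) : x ∈ closure {y | f y ≠ c} := by
  contrapose! h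
  rw [mem_closure_iff_frequently, Filter.not_frequently] at h
  have hfc : f =ᶠ[nhds x] fun _ => c := h.mono fun y hy => not_not.1 hy
  rw [hfc.fderiv_eq, fderiv_const_apply]

namespace MvPolynomial

variable {σ R : Type*} [CommRing R] [TopologicalSpace R] [IsTopologicalRing R]

theorem eval_option_elim_eq_zero_of_mem_closure [T1Space R] (P : MvPolynomial (Option σ) R)
    {f : (σ → R) → R} {x : σ → R} (hf : ContinuousAt f x) (hx : x ∈ closure {y | f y ≠ 0})
    (hPf : ∀ y, f y ≠ 0 → eval (fun i => i.elim (f y) y) P = 0) :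
    eval (fun i => i.elim (f x) x) P = 0 := by
  have hcont : ContinuousAt (fun y => eval (fun i => i.elim (f y) y) P) x :=
    (continuous_eval P).continuousAt.comp <| continuousAt_pi.2 fun
      | none => hf
      | some i => (continuous_apply i).continuousAt
  simpa using hcont.continuousWithinAt.mem_closure hx (t := {0}) hPf

theorem exists_ne_zero_eval_eq_zero_of_eval_option_elim_eq_zero [NoZeroDivisors R] [T1Space R]
    (P : MvPolynomial (Option σ) R) (hP : P ≠ 0) {f : (σ → R) → R}
    (hPf : ∀ x, eval (fun i => i.elim (f x) x) P = 0) :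
    ∃ Q : MvPolynomial σ R, Q ≠ 0 ∧ ∀ x, f x = 0 → ContinuousAt f x →
      x ∈ closure {y | f y ≠ 0} → eval x Q = 0 := by
  obtain ⟨k, q, hpq, hq⟩ := (optionEquivLeft R σ P).exists_eq_X_pow_mul_coeff_zero_ne_zero
    ((optionEquivLeft R σ).injective.ne_iff' (map_zero _) |>.2 hP)
  refine ⟨q.coeff 0, hq, fun x hfx hf hx => ?_⟩
  have hP_factor : ∀ y, eval (fun i => i.elim (f y) y) P =
      f y ^ k * eval (fun i => i.elim (f y) y) ((optionEquivLeft R σ).symm q) := by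
    intro y
    simp [optionEquivLeft_elim_eval, hpq]
  have := eval_option_elim_eq_zero_of_mem_closure ((optionEquivLeft R σ).symm q) hf hx
    fun y hy => (mul_eq_zero.1 ((hP_factor y).symm.trans (hPf y))).resolve_left (pow_ne_zero k hy)
  rwa [optionEquivLeft_elim_eval, AlgEquiv.apply_symm_apply, hfx, Polynomial.eval_zero_map,
    ← Polynomial.coeff_zero_eq_eval_zero] at this

end MvPolynomial

theorem algebraic_function_nondegenerate_zero_general
    (n : ℕ)
    (f : (Fin (n - 1) → ℝ) → ℝ)
    (P : MvPolynomial (Fin n) ℝ) (hP : P ≠ 0)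
    (hPf : ∀ x : Fin (n - 1) → ℝ,
      MvPolynomial.eval
        (fun i : Fin n => if h : (i : ℕ) < n - 1 then x ⟨i, h⟩ else f x) P = 0) :
    ∃ Q : MvPolynomial (Fin (n - 1)) ℝ, Q ≠ 0 ∧
      ∀ x : Fin (n - 1) → ℝ, f x = 0 → fderiv ℝ f x ≠ 0 →
        MvPolynomial.eval x Q = 0 := by
  rcases n with _ | m
  · have : Subsingleton ((Fin (0 - 1) → ℝ) →L[ℝ] ℝ) :=
      inferInstanceAs (Subsingleton ((Fin 0 → ℝ) →L[ℝ] ℝ))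
    exact ⟨1, one_ne_zero, fun x _ hdf => (hdf (Subsingleton.elim _ _)).elim⟩
  have hvars (x : Fin m → ℝ) : (fun i => (finSuccEquivLast i).elim (f x) x) =
      fun i : Fin (m + 1) => if h : (i : ℕ) < m + 1 - 1 then x ⟨i, h⟩ else f x := by
    funext i
    induction i using Fin.lastCases <;> simp
  obtain ⟨Q, hQ, hQf⟩ :=
    (MvPolynomial.rename finSuccEquivLast P).exists_ne_zero_eval_eq_zero_of_eval_option_elim_eq_zero
      ((MvPolynomial.rename_injective _ finSuccEquivLast.injective).ne_iff' (map_zero _) |>.2 hP)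
      fun x => by rw [MvPolynomial.eval_rename, Function.comp_def, hvars, hPf]
  refine ⟨Q, hQ, fun x hfx hdf => hQf x hfx ?_ (mem_closure_setOf_ne_of_fderiv_ne_zero 0 hdf)⟩
  by_contra hcont
  exact hdf (fderiv_zero_of_not_differentiableAt (mt DifferentiableAt.continuousAt hcont))

/-- **Algebraic function lemma** (Section 4.1).  Let `n ≥ 2` and let
`f : ℝ^{n-1} → ℝ` be a `C^∞` algebraic function, i.e. there is a nonzero
polynomial `P` in `n` variables with `P(x, f x) = 0` for all `x`.  Then there
is a nonzero polynomial `Q` in `n - 1` variables vanishing at every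
non-degenerate zero of `f`. -/
theorem algebraic_function_nondegenerate_zero
    (n : ℕ) (hn : 2 ≤ n)
    (f : (Fin (n - 1) → ℝ) → ℝ) (hf : ContDiff ℝ (⊤ : ℕ∞) f)
    (P : MvPolynomial (Fin n) ℝ) (hP : P ≠ 0)
    (hPf : ∀ x : Fin (n - 1) → ℝ,
      MvPolynomial.eval
        (fun i : Fin n => if h : (i : ℕ) < n - 1 then x ⟨i, h⟩ else f x) P = 0) :
    ∃ Q : MvPolynomial (Fin (n - 1)) ℝ, Q ≠ 0 ∧
      ∀ x : Fin (n - 1) → ℝ, f x = 0 → fderiv ℝ f x ≠ 0 →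
        MvPolynomial.eval x Q = 0 :=
  algebraic_function_nondegenerate_zero_general n f P hP hPf
end

section
/- Let n ≥ 3, let σ₁,…,σₙ ∈ {+1,−1}, and define f(x₁,…,x_{n−1}) := Σ_{i=1}^{n−1} σᵢ√|xᵢ| + σₙ√|Σ_{i=1}^{n−1} σᵢxᵢ|. Let j₁,…,j_{n−1} be nonzero real numbers with s := Σ_{i=1}^{n−1} σᵢjᵢ ≠ 0, and set jₙ := −σₙ·s (so that Σ_{i=1}^{n} σᵢjᵢ = 0). Then the function x₁ ↦ f(x₁, j₂,…,j_{n−1}) is differentiable at j₁ with derivative equal to σ₁·sgn(j₁)/(2√|j₁|) + σ₁σₙ·sgn(s)/(2√|s|), and this derivative vanishes if and only if j₁ = jₙ. -/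
/-!
Only the first coordinate moves, so `x₁ ↦ f(x₁, j₂, …)` is, up to a constant,
`σ₁ √|x₁| + σₙ √|s + σ₁ (x₁ - j₁)|`. Away from `0`, `(√|·|)' = g := sgn / (2 √|·|)`, whence
`D = σ₁ (g j₁ + σₙ g s)`. As `g` is odd and `σₙ = ±1`, `σₙ g s = -g jₙ`, so `D = 0` iff
`g j₁ = g jₙ`, and `g` is injective on `ℝ ∖ {0}` because `b ↦ sgn b / (4 b²)` inverts it.
-/

open Function

noncomputable def sqrtAbsDeriv (a : ℝ) : ℝ := Real.sign a / (2 * √|a|)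

theorem hasDerivAt_sqrt_abs {a : ℝ} (ha : a ≠ 0) :
    HasDerivAt (fun t => √|t|) (sqrtAbsDeriv a) a := by
  have hsqrt := Real.hasDerivAt_sqrt (abs_ne_zero.mpr ha)
  rcases ha.lt_or_gt with h | h
  · refine (hsqrt.comp a (hasDerivAt_abs_neg h)).congr_deriv ?_
    rw [sqrtAbsDeriv, Real.sign_of_neg h]; ring
  · refine (hsqrt.comp a (hasDerivAt_abs_pos h)).congr_deriv ?_
    rw [sqrtAbsDeriv, Real.sign_of_pos h]; ring

theorem hasDerivAt_sqrt_abs_add_mul_sub {s : ℝ} (hs : s ≠ 0) (c a : ℝ) :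
    HasDerivAt (fun t => √|s + (c * t - c * a)|) (sqrtAbsDeriv s * c) a := by
  have hinner : HasDerivAt (fun t => s + (c * t - c * a)) c a := by
    simpa using (((hasDerivAt_id a).const_mul c).sub_const (c * a)).const_add s
  have houter : HasDerivAt (fun y => √|y|) (sqrtAbsDeriv s) (s + (c * a - c * a)) := by
    rw [sub_self, add_zero]
    exact hasDerivAt_sqrt_abs hs
  exact HasDerivAt.comp (h₂ := fun y => √|y|) a houter hinner

theorem sqrtAbsDeriv_neg (a : ℝ) : sqrtAbsDeriv (-a) = -sqrtAbsDeriv a := by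
  simp only [sqrtAbsDeriv, Real.sign_neg, abs_neg, neg_div]

theorem sqrtAbsDeriv_mul_of_sign {ε : ℝ} (hε : ε = 1 ∨ ε = -1) (a : ℝ) :
    sqrtAbsDeriv (ε * a) = ε * sqrtAbsDeriv a := by
  rcases hε with rfl | rfl <;> simp [sqrtAbsDeriv_neg]

theorem sign_div_sq_sqrtAbsDeriv {a : ℝ} (ha : a ≠ 0) :
    Real.sign (sqrtAbsDeriv a) / (4 * sqrtAbsDeriv a ^ 2) = a := by
  have hroot : 0 < √|a| := Real.sqrt_pos.mpr (abs_pos.mpr ha)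
  have hsq : √|a| ^ 2 = |a| := Real.sq_sqrt (abs_nonneg a)
  rcases ha.lt_or_gt with h | h
  · have hd : sqrtAbsDeriv a = -(1 / (2 * √|a|)) := by
      rw [sqrtAbsDeriv, Real.sign_of_neg h]; ring
    rw [hd, Real.sign_of_neg (by simp [hroot]), neg_sq, div_pow, mul_pow, hsq, abs_of_neg h]
    field_simp
    ring
  · have hd : sqrtAbsDeriv a = 1 / (2 * √|a|) := by
      rw [sqrtAbsDeriv, Real.sign_of_pos h]
    rw [hd, Real.sign_of_pos (by positivity), div_pow, mul_pow, hsq, abs_of_pos h]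
    field_simp
    norm_num

theorem sqrtAbsDeriv_injOn : Set.InjOn sqrtAbsDeriv {0}ᶜ := fun a ha b hb hab => by
  rw [← sign_div_sq_sqrtAbsDeriv ha, ← sign_div_sq_sqrtAbsDeriv hb, hab]

theorem Fintype.sum_comp_update {ι α M : Type*} [Fintype ι] [DecidableEq ι] [AddCommGroup M]
    (g : ι → α → M) (x : ι → α) (k : ι) (t : α) :
    ∑ i, g i (update x k t i) = ∑ i, g i (x i) + (g k t - g k (x k)) := by
  rw [Fintype.sum_eq_add_sum_compl k, Fintype.sum_eq_add_sum_compl k (fun i => g i (x i)),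
    update_self]
  have hrest : ∑ i ∈ {k}ᶜ, g i (update x k t i) = ∑ i ∈ {k}ᶜ, g i (x i) :=
    Finset.sum_congr rfl fun i hi => by
      rw [update_of_ne (Finset.mem_compl.mp hi ∘ Finset.mem_singleton.mpr)]
  rw [hrest]
  abel

/-- Here `n = m + 3`, `σₙ = σ (Fin.last _)`, the first `n - 1` signs are indexed through
`Fin.castSucc`, and `x₁ ↦ f(x₁, j₂, …, j_{n-1})` is `t ↦ f (Function.update j 0 t)`. -/
theorem resonance_partial_derivative
    (m : ℕ)
    (σ : Fin (m + 3) → ℝ) (hσ : ∀ i, σ i = 1 ∨ σ i = -1)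
    (j : Fin (m + 2) → ℝ) (hj : ∀ i, j i ≠ 0)
    (s : ℝ) (hs : s = ∑ i : Fin (m + 2), σ i.castSucc * j i) (hs0 : s ≠ 0)
    (jn : ℝ) (hjn : jn = -σ (Fin.last (m + 2)) * s)
    (f : (Fin (m + 2) → ℝ) → ℝ)
    (hf : ∀ x : Fin (m + 2) → ℝ,
      f x = (∑ i : Fin (m + 2), σ i.castSucc * Real.sqrt |x i|)
        + σ (Fin.last (m + 2)) * Real.sqrt |∑ i : Fin (m + 2), σ i.castSucc * x i|)
    (D : ℝ)
    (hD : D = σ ((0 : Fin (m + 2)).castSucc) * Real.sign (j 0) / (2 * Real.sqrt |j 0|)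
        + σ ((0 : Fin (m + 2)).castSucc) * σ (Fin.last (m + 2)) * Real.sign s
            / (2 * Real.sqrt |s|)) :
    HasDerivAt (fun t : ℝ => f (Function.update j 0 t)) D (j 0)
      ∧ (D = 0 ↔ j 0 = jn) := by
  set σ₁ := σ (0 : Fin (m + 2)).castSucc
  set σₙ := σ (Fin.last (m + 2))
  have hσ_ne : ∀ i, σ i ≠ 0 := fun i => by rcases hσ i with h | h <;> simp [h]
  have hpartial : (fun t => f (update j 0 t)) = fun t =>
      (∑ i, σ i.castSucc * √|j i| + (σ₁ * √|t| - σ₁ * √|j 0|))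
        + σₙ * √|s + (σ₁ * t - σ₁ * j 0)| := by
    funext t
    rw [hf, Fintype.sum_comp_update (fun (i : Fin (m + 2)) y => σ i.castSucc * √|y|),
      Fintype.sum_comp_update (fun (i : Fin (m + 2)) y => σ i.castSucc * y), ← hs]
  have hD : D = σ₁ * sqrtAbsDeriv (j 0) + σₙ * (sqrtAbsDeriv s * σ₁) := by
    rw [hD, sqrtAbsDeriv, sqrtAbsDeriv]
    ring
  have hjn_deriv : sqrtAbsDeriv jn = -(σₙ * sqrtAbsDeriv s) := by
    rw [hjn, neg_mul, sqrtAbsDeriv_neg, sqrtAbsDeriv_mul_of_sign (hσ _)]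
  have hjn0 : jn ≠ 0 := hjn ▸ mul_ne_zero (neg_ne_zero.mpr (hσ_ne _)) hs0
  refine ⟨?_, ?_⟩
  · rw [hpartial, hD]
    exact ((((hasDerivAt_sqrt_abs (hj 0)).const_mul σ₁).sub_const _).const_add _).add
      ((hasDerivAt_sqrt_abs_add_mul_sub hs0 σ₁ (j 0)).const_mul σₙ)
  · rw [show D = σ₁ * (sqrtAbsDeriv (j 0) - sqrtAbsDeriv jn) by rw [hD, hjn_deriv]; ring,
      mul_eq_zero, sub_eq_zero, sqrtAbsDeriv_injOn.eq_iff (hj 0) hjn0, or_iff_right (hσ_ne _)]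
end

section
/- Let ν ≥ 1 and let j̄₁,…,j̄_ν be nonzero integers; set ω̄ := (√|j̄₁|,…,√|j̄_ν|) ∈ ℝ^ν and 𝚟 := (j̄₁,…,j̄_ν) ∈ ℤ^ν. Then there exists a constant C > 0 such that for all σ, σ' ∈ {+1,−1}, all nonzero integers j, k, and all ℓ ∈ ℤ^ν with Σᵢ|ℓᵢ| = 1 and Σᵢℓᵢj̄ᵢ + j − k = 0, one has |Σᵢℓᵢ√|j̄ᵢ| + σ√|j| − σ'√|k|| ≥ C. -/
set_option maxHeartbeats 1000000

private lemma one_le_sqrt_int {a : ℤ} (ha : 1 ≤ a) : 1 ≤ Real.sqrt (a : ℝ) := by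
  rw [show (1:ℝ) = Real.sqrt 1 by simp]
  exact Real.sqrt_le_sqrt (by exact_mod_cast ha)

private lemma helperA (A : ℝ) (hA : 1 ≤ A) (a b c : ℤ)
    (ha : 1 ≤ a) (hb : 1 ≤ b) (hc : 1 ≤ c) (haA : (a:ℝ) ≤ A)
    (h1 : |b - c| ≤ a) (h2 : a ≤ b + c) :
    1/(200*A^2) ≤ |Real.sqrt (a:ℝ) + Real.sqrt (b:ℝ) - Real.sqrt (c:ℝ)| := by
  set x := Real.sqrt (a:ℝ) with hxdef
  set y := Real.sqrt (b:ℝ) with hydef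
  set z := Real.sqrt (c:ℝ) with hzdef
  have hx1 : 1 ≤ x := one_le_sqrt_int ha
  have hy1 : 1 ≤ y := one_le_sqrt_int hb
  have hz1 : 1 ≤ z := one_le_sqrt_int hc
  have hx2 : x^2 = (a:ℝ) := Real.sq_sqrt (by positivity)
  have hy2 : y^2 = (b:ℝ) := Real.sq_sqrt (by positivity)
  have hz2 : z^2 = (c:ℝ) := Real.sq_sqrt (by positivity)
  have h1r : |(b:ℝ) - (c:ℝ)| ≤ (a:ℝ) := by exact_mod_cast h1
  have h2r : (a:ℝ) ≤ (b:ℝ) + (c:ℝ) := by exact_mod_cast h2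
  by_cases hcase : 4*x ≤ y + z
  · have hyz : |y - z| * (y + z) ≤ x^2 := by
      have h' : (y - z) * (y + z) = (b:ℝ) - c := by rw [← hy2, ← hz2]; ring
      have h'' : |y - z| * (y + z) = |(b:ℝ) - c| := by
        rw [← h', abs_mul, abs_of_pos (by linarith : (0:ℝ) < y + z)]
      rw [h'', hx2]; exact h1r
    have hd : |y - z| ≤ x/4 := by
      nlinarith [abs_nonneg (y - z), hyz, hcase, hx1]
    have hS : 3/4 ≤ x + y - z := by
      have h3 := abs_le.mp hd
      linarith [h3.1, h3.2]
    calc 1/(200*A^2) ≤ 3/4 := by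
          rw [div_le_iff₀ (by positivity)]; nlinarith [sq_nonneg (A-1), hA]
      _ ≤ x + y - z := hS
      _ ≤ |x + y - z| := le_abs_self _
  · push_neg at hcase
    set Q : ℤ := 2*(a*b + b*c + c*a) - a^2 - b^2 - c^2 with hQdef
    have hid : ((Q:ℤ):ℝ) = (x+y+z)*(-x+y+z)*(x-y+z)*(x+y-z) := by
      rw [hQdef]; push_cast; rw [← hx2, ← hy2, ← hz2]; ring
    have hyz1 : (1:ℝ) ≤ y*z := by nlinarith [hy1, hz1]
    have hxz1 : (1:ℝ) ≤ x*z := by nlinarith [hx1, hz1]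
    have hxy1 : (1:ℝ) ≤ x*y := by nlinarith [hx1, hy1]
    have hf1 : (0:ℝ) < x+y+z := by linarith
    have hf2 : -x+y+z ≠ 0 := by
      intro h
      have hxe : x = y + z := by linarith
      have : (a:ℝ) = b + c + 2*(y*z) := by rw [← hx2, ← hy2, ← hz2, hxe]; ring
      linarith
    have hf3 : x-y+z ≠ 0 := by
      intro h
      have hye : y = x + z := by linarith
      have : (b:ℝ) = a + c + 2*(x*z) := by rw [← hx2, ← hy2, ← hz2, hye]; ring
      have hbc : (b:ℝ) - c ≤ a := (abs_le.mp h1r).2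
      linarith
    have hf4 : x+y-z ≠ 0 := by
      intro h
      have hze : z = x + y := by linarith
      have : (c:ℝ) = a + b + 2*(x*y) := by rw [← hx2, ← hy2, ← hz2, hze]; ring
      have hcb : -(a:ℝ) ≤ b - c := (abs_le.mp h1r).1
      linarith
    have hQne : Q ≠ 0 := by
      intro h
      have hprod : (x+y+z)*(-x+y+z)*(x-y+z)*(x+y-z) ≠ 0 :=
        mul_ne_zero (mul_ne_zero (mul_ne_zero (ne_of_gt hf1) hf2) hf3) hf4
      exact hprod (by rw [← hid, h]; norm_num)
    have hQ1 : (1:ℝ) ≤ |((Q:ℤ):ℝ)| := by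
      have h' : 1 ≤ |Q| := Int.one_le_abs hQne
      exact_mod_cast h'
    have hxsA : x ≤ Real.sqrt A := Real.sqrt_le_sqrt haA
    have hsA1 : 1 ≤ Real.sqrt A := by
      rw [show (1:ℝ) = Real.sqrt 1 by simp]
      exact Real.sqrt_le_sqrt hA
    have hsA2 : (Real.sqrt A)^2 = A := Real.sq_sqrt (by linarith)
    have hsAle : Real.sqrt A ≤ A := by nlinarith [hsA1, hsA2]
    have h5 : x + y + z ≤ 5*Real.sqrt A := by linarith
    have habs1 : |x+y+z| ≤ 5*Real.sqrt A := by
      rw [abs_of_pos hf1]; exact h5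
    have habs2 : |(-x+y+z)| ≤ 5*Real.sqrt A := by
      rw [abs_le]; constructor <;> linarith
    have habs3 : |x-y+z| ≤ 5*Real.sqrt A := by
      rw [abs_le]; constructor <;> linarith
    have hP : |(x+y+z)*(-x+y+z)*(x-y+z)| ≤ 125*A^2 := by
      have e1 : |(x+y+z)*(-x+y+z)*(x-y+z)| = |x+y+z| * |(-x+y+z)| * |x-y+z| := by
        rw [abs_mul, abs_mul]
      rw [e1]
      calc |x+y+z| * |(-x+y+z)| * |x-y+z|
          ≤ (5*Real.sqrt A)*(5*Real.sqrt A)*(5*Real.sqrt A) := by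
            gcongr <;> first | exact abs_nonneg _ | positivity
        _ = 125 * ((Real.sqrt A)^2 * Real.sqrt A) := by ring
        _ = 125 * (A * Real.sqrt A) := by rw [hsA2]
        _ ≤ 125 * (A * A) := by nlinarith [hsAle, hA]
        _ = 125 * A^2 := by ring
    have hkey : 1 ≤ 125*A^2 * |x+y-z| := by
      have hsplit : |((Q:ℤ):ℝ)| = |(x+y+z)*(-x+y+z)*(x-y+z)| * |x+y-z| := by
        rw [hid, abs_mul]
      nlinarith [abs_nonneg (x+y-z), abs_nonneg ((x+y+z)*(-x+y+z)*(x-y+z)), hQ1, hP, hsplit]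
    rw [div_le_iff₀ (by positivity)]
    nlinarith [abs_nonneg (x+y-z), sq_nonneg A, hkey]

private lemma helperB (A : ℝ) (hA : 1 ≤ A) (a b c : ℤ)
    (ha : 1 ≤ a) (hb : 1 ≤ b) (hc : 1 ≤ c) (haA : (a:ℝ) ≤ A)
    (h2 : a ≤ b + c) :
    1/(200*A^2) ≤ |Real.sqrt (a:ℝ) - Real.sqrt (b:ℝ) - Real.sqrt (c:ℝ)| := by
  set x := Real.sqrt (a:ℝ) with hxdef
  set y := Real.sqrt (b:ℝ) with hydef
  set z := Real.sqrt (c:ℝ) with hzdef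
  have hx1 : 1 ≤ x := one_le_sqrt_int ha
  have hy1 : 1 ≤ y := one_le_sqrt_int hb
  have hz1 : 1 ≤ z := one_le_sqrt_int hc
  have hx2 : x^2 = (a:ℝ) := Real.sq_sqrt (by positivity)
  have hy2 : y^2 = (b:ℝ) := Real.sq_sqrt (by positivity)
  have hz2 : z^2 = (c:ℝ) := Real.sq_sqrt (by positivity)
  have h2r : (a:ℝ) ≤ (b:ℝ) + (c:ℝ) := by exact_mod_cast h2
  have hyz1 : (1:ℝ) ≤ y*z := by nlinarith [hy1, hz1]
  have hw : x^2 + 2 ≤ (y+z)^2 := by nlinarith [hyz1, hy2, hz2, hx2, h2r]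
  have hlt : x < y + z := by nlinarith [hw, hx1, hy1, hz1]
  have habs : |x - y - z| = y + z - x := by
    rw [abs_of_neg (by linarith : x - y - z < 0)]; ring
  rw [habs]
  have hxsA : x ≤ Real.sqrt A := Real.sqrt_le_sqrt haA
  have hsA1 : 1 ≤ Real.sqrt A := by
    rw [show (1:ℝ) = Real.sqrt 1 by simp]
    exact Real.sqrt_le_sqrt hA
  have hsA2 : (Real.sqrt A)^2 = A := Real.sq_sqrt (by linarith)
  have hsAle : Real.sqrt A ≤ A := by nlinarith [hsA1, hsA2]
  by_cases hcase : y + z ≤ x + 1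
  · have hkey : 2 ≤ (y+z-x)*(y+z+x) := by nlinarith [hw, hlt]
    have hup : y+z+x ≤ 3*A := by linarith
    have hd : 2/(3*A) ≤ y+z-x := by
      rw [div_le_iff₀ (by positivity)]
      nlinarith [hkey, hup, hlt]
    calc 1/(200*A^2) ≤ 2/(3*A) := by
          rw [div_le_div_iff₀ (by positivity) (by positivity)]
          nlinarith [sq_nonneg (A-1), hA]
      _ ≤ y+z-x := hd
  · push_neg at hcase
    calc 1/(200*A^2) ≤ 1 := by
          rw [div_le_one (by positivity)]; nlinarith [sq_nonneg (A-1), hA]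
      _ ≤ y+z-x := by linarith

private lemma core (A : ℝ) (hA : 1 ≤ A) (a b c : ℤ)
    (ha : 1 ≤ a) (hb : 1 ≤ b) (hc : 1 ≤ c)
    (haA : (a:ℝ) ≤ A) (h1 : |b - c| ≤ a) (h2 : a ≤ b + c)
    (ε σ σ' : ℝ) (hε : ε = 1 ∨ ε = -1) (hσ : σ = 1 ∨ σ = -1) (hσ' : σ' = 1 ∨ σ' = -1) :
    1/(200*A^2) ≤ |ε * Real.sqrt (a:ℝ) + σ * Real.sqrt (b:ℝ) - σ' * Real.sqrt (c:ℝ)| := by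
  have h1' : |c - b| ≤ a := by rw [abs_sub_comm]; exact h1
  have h2' : a ≤ c + b := by linarith
  have hx1 := one_le_sqrt_int ha
  have hy1 := one_le_sqrt_int hb
  have hz1 := one_le_sqrt_int hc
  have htriv : 1/(200*A^2) ≤ |Real.sqrt (a:ℝ) + Real.sqrt (b:ℝ) + Real.sqrt (c:ℝ)| := by
    calc 1/(200*A^2) ≤ 3 := by
          rw [div_le_iff₀ (by positivity)]; nlinarith [sq_nonneg (A-1), hA]
      _ ≤ Real.sqrt (a:ℝ) + Real.sqrt (b:ℝ) + Real.sqrt (c:ℝ) := by linarith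
      _ ≤ |Real.sqrt (a:ℝ) + Real.sqrt (b:ℝ) + Real.sqrt (c:ℝ)| := le_abs_self _
  rcases hε with rfl|rfl <;> rcases hσ with rfl|rfl <;> rcases hσ' with rfl|rfl
  · calc 1/(200*A^2) ≤ |Real.sqrt (a:ℝ) + Real.sqrt (b:ℝ) - Real.sqrt (c:ℝ)| :=
          helperA A hA a b c ha hb hc haA h1 h2
      _ = _ := by congr 1; ring
  · calc 1/(200*A^2) ≤ |Real.sqrt (a:ℝ) + Real.sqrt (b:ℝ) + Real.sqrt (c:ℝ)| := htriv
      _ = _ := by congr 1; ring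
  · calc 1/(200*A^2) ≤ |Real.sqrt (a:ℝ) - Real.sqrt (b:ℝ) - Real.sqrt (c:ℝ)| :=
          helperB A hA a b c ha hb hc haA h2
      _ = _ := by congr 1; ring
  · calc 1/(200*A^2) ≤ |Real.sqrt (a:ℝ) + Real.sqrt (c:ℝ) - Real.sqrt (b:ℝ)| :=
          helperA A hA a c b ha hc hb haA h1' h2'
      _ = _ := by congr 1; ring
  · calc 1/(200*A^2) ≤ |Real.sqrt (a:ℝ) + Real.sqrt (c:ℝ) - Real.sqrt (b:ℝ)| :=
          helperA A hA a c b ha hc hb haA h1' h2'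
      _ = _ := by rw [← abs_neg]; congr 1; ring
  · calc 1/(200*A^2) ≤ |Real.sqrt (a:ℝ) - Real.sqrt (b:ℝ) - Real.sqrt (c:ℝ)| :=
          helperB A hA a b c ha hb hc haA h2
      _ = _ := by rw [← abs_neg]; congr 1; ring
  · calc 1/(200*A^2) ≤ |Real.sqrt (a:ℝ) + Real.sqrt (b:ℝ) + Real.sqrt (c:ℝ)| := htriv
      _ = _ := by rw [← abs_neg]; congr 1; ring
  · calc 1/(200*A^2) ≤ |Real.sqrt (a:ℝ) + Real.sqrt (b:ℝ) - Real.sqrt (c:ℝ)| :=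
          helperA A hA a b c ha hb hc haA h1 h2
      _ = _ := by rw [← abs_neg]; congr 1; ring



/-- First bound of the lower-bound lemma (Section 10.1.1): a uniform lower
bound on the small divisors `ω̄·ℓ + σ√|j| - σ'√|k|` for `|ℓ| = 1` under the
momentum constraint `𝚟·ℓ + j - k = 0`, where `ω̄ᵢ = √|j̄ᵢ|` and `𝚟 = (j̄ᵢ)ᵢ`. -/
theorem small_divisor_lower_bound_ell_one
    (ν : ℕ) (hν : 1 ≤ ν) (jb : Fin ν → ℤ) (hjb : ∀ i, jb i ≠ 0) :
    ∃ C : ℝ, 0 < C ∧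
      ∀ (σ σ' : ℝ), (σ = 1 ∨ σ = -1) → (σ' = 1 ∨ σ' = -1) →
      ∀ (j k : ℤ), j ≠ 0 → k ≠ 0 →
      ∀ ℓ : Fin ν → ℤ, (∑ i, |ℓ i|) = 1 → (∑ i, ℓ i * jb i) + j - k = 0 →
        C ≤ abs ((∑ i, (ℓ i : ℝ) * Real.sqrt |(jb i : ℝ)|)
          + σ * Real.sqrt |(j : ℝ)| - σ' * Real.sqrt |(k : ℝ)|) := by
  classical
  set Aint : ℕ := Finset.univ.sup (fun i => (jb i).natAbs) with hAdef
  set A : ℝ := (Aint : ℝ) with hArdef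
  have hA : 1 ≤ A := by
    obtain ⟨i⟩ : Nonempty (Fin ν) := ⟨⟨0, hν⟩⟩
    have h1 : 1 ≤ (jb i).natAbs := Int.natAbs_pos.mpr (hjb i)
    have h2 : (jb i).natAbs ≤ Aint :=
      Finset.le_sup (f := fun i => (jb i).natAbs) (Finset.mem_univ i)
    have : 1 ≤ Aint := le_trans h1 h2
    rw [hArdef]; exact_mod_cast this
  have hApos : (0:ℝ) < A := by linarith
  refine ⟨1/(200*A^2), by positivity, ?_⟩
  intro σ σ' hσ hσ' j k hj hk ℓ hℓ hmom
  obtain ⟨i0, hi0⟩ : ∃ i, ℓ i ≠ 0 := by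
    by_contra h
    push_neg at h
    simp [h] at hℓ
  have hsplit : ∑ i ∈ Finset.univ.erase i0, |ℓ i| + |ℓ i0| = 1 := by
    rw [← hℓ]; exact Finset.sum_erase_add _ _ (Finset.mem_univ i0)
  have hone : 1 ≤ |ℓ i0| := Int.one_le_abs hi0
  have hnn : 0 ≤ ∑ i ∈ Finset.univ.erase i0, |ℓ i| :=
    Finset.sum_nonneg (fun i _ => abs_nonneg _)
  have hsum0 : ∑ i ∈ Finset.univ.erase i0, |ℓ i| = 0 := by linarith
  have habs1 : |ℓ i0| = 1 := by linarith
  have hzero : ∀ i, i ≠ i0 → ℓ i = 0 := by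
    intro i hi
    have h' := (Finset.sum_eq_zero_iff_of_nonneg
      (fun i _ => abs_nonneg (ℓ i))).mp hsum0 i (by simp [hi])
    exact abs_eq_zero.mp h'
  have hmom' : ℓ i0 * jb i0 + j - k = 0 := by
    rwa [Finset.sum_eq_single i0 (fun b _ hb => by rw [hzero b hb]; ring)
      (fun h => absurd (Finset.mem_univ i0) h)] at hmom
  have hsumr : ∑ i, (ℓ i : ℝ) * Real.sqrt |(jb i : ℝ)| =
      (ℓ i0 : ℝ) * Real.sqrt |(jb i0 : ℝ)| :=
    Finset.sum_eq_single i0 (fun b _ hb => by rw [hzero b hb]; simp)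
      (fun h => absurd (Finset.mem_univ i0) h)
  rw [hsumr]
  have hcast : ∀ m : ℤ, |(m:ℝ)| = ((|m| : ℤ) : ℝ) := fun m => by push_cast; ring
  rw [hcast (jb i0), hcast j, hcast k]
  have hkj : k - j = ℓ i0 * jb i0 := by linarith
  have hkjabs : |k - j| = |jb i0| := by
    rw [hkj, abs_mul, habs1, one_mul]
  have htri : |k - j| ≤ |k| + |j| := by
    have := abs_add_le k (-j)
    simpa [sub_eq_add_neg] using this
  refine core A hA |jb i0| |j| |k| (Int.one_le_abs (hjb i0)) (Int.one_le_abs hj)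
    (Int.one_le_abs hk) ?_ ?_ ?_ ((ℓ i0 : ℝ)) σ σ' ?_ hσ hσ'
  · have h2 : (jb i0).natAbs ≤ Aint :=
      Finset.le_sup (f := fun i => (jb i).natAbs) (Finset.mem_univ i0)
    have he : ((|jb i0| : ℤ) : ℝ) = ((jb i0).natAbs : ℝ) := by
      push_cast [Nat.cast_natAbs]; ring
    rw [he, hArdef]
    exact_mod_cast h2
  · calc |(|j| - |k|)| ≤ |j - k| := abs_abs_sub_abs_le_abs_sub j k
      _ = |k - j| := abs_sub_comm j k
      _ = |jb i0| := hkjabs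
  · calc |jb i0| = |k - j| := hkjabs.symm
      _ ≤ |k| + |j| := htri
      _ = |j| + |k| := by ring
  · rcases (abs_eq (by norm_num : (0:ℤ) ≤ 1)).mp habs1 with h | h
    · left; rw [h]; norm_num
    · right; rw [h]; norm_num
end

section
/- For all nonzero integers a and b with a + b ≠ 0 one has √|a| + √|b| − √|a+b| ≥ 2/9. -/
/-- Quantitative inequality from the proof of the lower-bound lemma
(Section 10.1.1): for nonzero integers `a, b` with `a + b ≠ 0`,
`√|a| + √|b| - √|a+b| ≥ 2/9`. -/
theorem sqrt_abs_add_lower_bound (a b : ℤ) (ha : a ≠ 0) (hb : b ≠ 0)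
    (hab : a + b ≠ 0) :
    (2 : ℝ) / 9 ≤ Real.sqrt |(a : ℝ)| + Real.sqrt |(b : ℝ)|
      - Real.sqrt |(a : ℝ) + (b : ℝ)| := by
  have ha1 : (1 : ℝ) ≤ |(a : ℝ)| := by
    have := Int.one_le_abs ha
    push_cast [← Int.cast_abs] at *
    exact_mod_cast this
  have hb1 : (1 : ℝ) ≤ |(b : ℝ)| := by
    have := Int.one_le_abs hb
    push_cast [← Int.cast_abs] at *
    exact_mod_cast this
  set x := Real.sqrt |(a : ℝ)| with hxdef
  set y := Real.sqrt |(b : ℝ)| with hydef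
  have hx : (1 : ℝ) ≤ x := Real.one_le_sqrt.mpr ha1
  have hy : (1 : ℝ) ≤ y := Real.one_le_sqrt.mpr hb1
  have hx2 : x ^ 2 = |(a : ℝ)| := Real.sq_sqrt (abs_nonneg _)
  have hy2 : y ^ 2 = |(b : ℝ)| := Real.sq_sqrt (abs_nonneg _)
  have key : Real.sqrt |(a : ℝ) + (b : ℝ)| ≤ x + y - 2 / 9 := by
    rw [show x + y - 2 / 9 = Real.sqrt ((x + y - 2 / 9) ^ 2) from
      (Real.sqrt_sq (by linarith)).symm]
    apply Real.sqrt_le_sqrt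
    have habs : |(a : ℝ) + (b : ℝ)| ≤ |(a : ℝ)| + |(b : ℝ)| := abs_add_le _ _
    nlinarith [mul_le_mul hx hy zero_le_one (by linarith : (0:ℝ) ≤ x)]
  linarith
end

section
/- For all nonzero integers m and k with k + m ≠ 0 one has √|m| + √|k| − √|k+m| ≥ min{1/2, 1/(2√|m|)}. -/
/-- Inequality from the proof of the lower-bound lemma (Section 10.1.1), case
`σ = σ'`: for nonzero integers `m, k` with `k + m ≠ 0`,
`√|m| + √|k| - √|k+m| ≥ min{1/2, 1/(2√|m|)}`. -/
theorem sqrt_abs_lower_bound_min (m k : ℤ) (hm : m ≠ 0) (hk : k ≠ 0)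
    (hkm : k + m ≠ 0) :
    min ((1 : ℝ) / 2) (1 / (2 * Real.sqrt |(m : ℝ)|)) ≤
      Real.sqrt |(m : ℝ)| + Real.sqrt |(k : ℝ)|
        - Real.sqrt |(k : ℝ) + (m : ℝ)| := by
  have hm1 : (1:ℝ) ≤ |(m : ℝ)| := by exact_mod_cast Int.one_le_abs hm
  have hk1 : (1:ℝ) ≤ |(k : ℝ)| := by exact_mod_cast Int.one_le_abs hk
  set a := Real.sqrt |(m : ℝ)| with ha
  set b := Real.sqrt |(k : ℝ)| with hb
  have ha1 : (1:ℝ) ≤ a := by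
    rw [ha, show (1:ℝ) = Real.sqrt 1 by simp]
    exact Real.sqrt_le_sqrt hm1
  have hb1 : (1:ℝ) ≤ b := by
    rw [hb, show (1:ℝ) = Real.sqrt 1 by simp]
    exact Real.sqrt_le_sqrt hk1
  have ha2 : a ^ 2 = |(m : ℝ)| := Real.sq_sqrt (abs_nonneg _)
  have hb2 : b ^ 2 = |(k : ℝ)| := Real.sq_sqrt (abs_nonneg _)
  have habs : |(k : ℝ) + (m : ℝ)| ≤ |(k : ℝ)| + |(m : ℝ)| := abs_add_le _ _
  have hkey : Real.sqrt |(k : ℝ) + (m : ℝ)| ≤ a + b - 1/2 := by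
    have h1 : |(k : ℝ) + (m : ℝ)| ≤ (a + b - 1/2) ^ 2 := by nlinarith
    calc Real.sqrt |(k : ℝ) + (m : ℝ)| ≤ Real.sqrt ((a + b - 1/2) ^ 2) :=
          Real.sqrt_le_sqrt h1
      _ = a + b - 1/2 := by
          rw [Real.sqrt_sq (by nlinarith)]
  have hmin : min ((1 : ℝ) / 2) (1 / (2 * a)) ≤ 1/2 := min_le_left _ _
  linarith
end

section
/- Let ν ≥ 1 and let j̄₁,…,j̄_ν be nonzero integers; set ω̄ := (√|j̄₁|,…,√|j̄_ν|) ∈ ℝ^ν and 𝚟 := (j̄₁,…,j̄_ν) ∈ ℤ^ν. Assume that Σᵢℓᵢ√|j̄ᵢ| ≠ 0 for every ℓ ∈ ℤ^ν with 0 < Σᵢ|ℓᵢ| ≤ 6. Then there exist constants C > 0 and K > 0 such that for every ℓ ∈ ℤ^ν with 0 < Σᵢ|ℓᵢ| ≤ 6, all σ, σ' ∈ {+1,−1}, and all nonzero integers j, k with |j| ≥ C, |k| ≥ C and Σᵢℓᵢj̄ᵢ + j − k = 0, one has |Σᵢℓᵢ√|j̄ᵢ| + σ√|j| − σ'√|k||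 ≥ K. -/
/-- Part (ii) of the lower-bound lemma (Section 10.1.1): lower bound on the
small divisors `ω̄·ℓ + σ√|j| - σ'√|k|` for `0 < |ℓ| ≤ 6` and `|j|, |k|` large,
under the momentum constraint `𝚟·ℓ + j - k = 0`, assuming `ω̄·ℓ ≠ 0` for all
`0 < |ℓ| ≤ 6`. -/
theorem small_divisor_lower_bound_high_modes
    (ν : ℕ) (hν : 1 ≤ ν) (jb : Fin ν → ℤ) (hjb : ∀ i, jb i ≠ 0)
    (hgen : ∀ ℓ : Fin ν → ℤ, 0 < (∑ i, |ℓ i|) → (∑ i, |ℓ i|) ≤ 6 →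
      (∑ i, (ℓ i : ℝ) * Real.sqrt |(jb i : ℝ)|) ≠ 0) :
    ∃ C K : ℝ, 0 < C ∧ 0 < K ∧
      ∀ ℓ : Fin ν → ℤ, 0 < (∑ i, |ℓ i|) → (∑ i, |ℓ i|) ≤ 6 →
      ∀ (σ σ' : ℝ), (σ = 1 ∨ σ = -1) → (σ' = 1 ∨ σ' = -1) →
      ∀ (j k : ℤ), j ≠ 0 → k ≠ 0 → C ≤ |(j : ℝ)| → C ≤ |(k : ℝ)| →
        (∑ i, ℓ i * jb i) + j - k = 0 →
        K ≤ abs ((∑ i, (ℓ i : ℝ) * Real.sqrt |(jb i : ℝ)|)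
          + σ * Real.sqrt |(j : ℝ)| - σ' * Real.sqrt |(k : ℝ)|) := by
  classical
  set w : (Fin ν → ℤ) → ℝ := fun ℓ => ∑ i, (ℓ i : ℝ) * Real.sqrt |(jb i : ℝ)| with hw
  set S : Finset (Fin ν → ℤ) :=
    (Fintype.piFinset fun _ : Fin ν => Finset.Icc (-6 : ℤ) 6).filter
      (fun ℓ => 0 < (∑ i, |ℓ i|) ∧ (∑ i, |ℓ i|) ≤ 6) with hSdef
  have hbound : ∀ ℓ : Fin ν → ℤ, (∑ i, |ℓ i|) ≤ 6 → ∀ i, |ℓ i| ≤ 6 := by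
    intro ℓ h i
    exact le_trans (Finset.single_le_sum (fun j _ => abs_nonneg (ℓ j)) (Finset.mem_univ i)) h
  have hmem : ∀ ℓ : Fin ν → ℤ, 0 < (∑ i, |ℓ i|) → (∑ i, |ℓ i|) ≤ 6 → ℓ ∈ S := by
    intro ℓ h1 h2
    rw [hSdef, Finset.mem_filter, Fintype.mem_piFinset]
    refine ⟨fun i => Finset.mem_Icc.mpr ?_, h1, h2⟩
    have := hbound ℓ h2 i
    rw [abs_le] at this; exact this
  have hne : S.Nonempty := by
    have hs : (∑ i, |if i = (⟨0, hν⟩ : Fin ν) then (1 : ℤ) else 0|) = 1 := by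
      simp only [apply_ite (abs : ℤ → ℤ), abs_one, abs_zero]
      simp [Finset.sum_ite_eq']
    exact ⟨fun i => if i = ⟨0, hν⟩ then 1 else 0, hmem _ (by rw [hs]; norm_num) (by rw [hs]; norm_num)⟩
  set m : ℝ := S.inf' hne (fun ℓ => |w ℓ|) with hm
  have hmpos : 0 < m := by
    rw [hm, Finset.lt_inf'_iff]
    intro ℓ hℓ
    rw [hSdef, Finset.mem_filter] at hℓ
    exact abs_pos.mpr (hgen ℓ hℓ.2.1 hℓ.2.2)
  have hmle : ∀ ℓ : Fin ν → ℤ, 0 < (∑ i, |ℓ i|) → (∑ i, |ℓ i|) ≤ 6 → m ≤ |w ℓ| :=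
    fun ℓ h1 h2 => Finset.inf'_le _ (hmem ℓ h1 h2)
  set R : ℝ := ∑ i, Real.sqrt |(jb i : ℝ)| with hR
  have hRnn : 0 ≤ R := Finset.sum_nonneg fun i _ => Real.sqrt_nonneg _
  set M : ℝ := 6 * ∑ i, |(jb i : ℝ)| with hM
  have hMnn : 0 ≤ M := by
    rw [hM]
    have : 0 ≤ ∑ i, |(jb i : ℝ)| := Finset.sum_nonneg fun i _ => abs_nonneg _
    linarith
  have hwub : ∀ ℓ : Fin ν → ℤ, (∑ i, |ℓ i|) ≤ 6 → |w ℓ| ≤ 6 * R := by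
    intro ℓ h
    calc |w ℓ| ≤ ∑ i, abs ((ℓ i : ℝ) * Real.sqrt |(jb i : ℝ)|) := Finset.abs_sum_le_sum_abs _ _
    _ ≤ ∑ i, 6 * Real.sqrt |(jb i : ℝ)| := by
        refine Finset.sum_le_sum fun i _ => ?_
        rw [abs_mul, abs_of_nonneg (Real.sqrt_nonneg _)]
        have h6 : |(ℓ i : ℝ)| ≤ 6 := by exact_mod_cast hbound ℓ h i
        exact mul_le_mul_of_nonneg_right h6 (Real.sqrt_nonneg _)
    _ = 6 * R := by rw [hR, Finset.mul_sum]
  have hvub : ∀ ℓ : Fin ν → ℤ, (∑ i, |ℓ i|) ≤ 6 →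
      |((∑ i, ℓ i * jb i : ℤ) : ℝ)| ≤ M := by
    intro ℓ h
    push_cast
    calc |∑ i, (ℓ i : ℝ) * (jb i : ℝ)| ≤ ∑ i, |(ℓ i : ℝ) * (jb i : ℝ)| :=
          Finset.abs_sum_le_sum_abs _ _
    _ ≤ ∑ i, 6 * |(jb i : ℝ)| := by
        refine Finset.sum_le_sum fun i _ => ?_
        rw [abs_mul]
        have h6 : |(ℓ i : ℝ)| ≤ 6 := by exact_mod_cast hbound ℓ h i
        exact mul_le_mul_of_nonneg_right h6 (abs_nonneg _)
    _ = M := by rw [hM, Finset.mul_sum]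
  refine ⟨max ((M / m) ^ 2) ((3 * R + m / 4) ^ 2) + 1, m / 2, ?_, by linarith, ?_⟩
  · have : (0 : ℝ) ≤ max ((M / m) ^ 2) ((3 * R + m / 4) ^ 2) :=
      le_max_of_le_left (sq_nonneg _)
    linarith
  set C : ℝ := max ((M / m) ^ 2) ((3 * R + m / 4) ^ 2) + 1 with hC
  have hCpos : 0 < C := by
    have h0 : (0 : ℝ) ≤ max ((M / m) ^ 2) ((3 * R + m / 4) ^ 2) :=
      le_max_of_le_left (sq_nonneg _)
    rw [hC]; linarith
  have hsC1 : M / m ≤ Real.sqrt C := by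
    have h1 : Real.sqrt ((M / m) ^ 2) ≤ Real.sqrt C :=
      Real.sqrt_le_sqrt (by linarith [le_max_left ((M / m) ^ 2) ((3 * R + m / 4) ^ 2)])
    rwa [Real.sqrt_sq (by positivity)] at h1
  have hsC2 : 3 * R + m / 4 ≤ Real.sqrt C := by
    have h1 : Real.sqrt ((3 * R + m / 4) ^ 2) ≤ Real.sqrt C :=
      Real.sqrt_le_sqrt (by linarith [le_max_right ((M / m) ^ 2) ((3 * R + m / 4) ^ 2)])
    rwa [Real.sqrt_sq (by positivity)] at h1
  have hsCpos : 0 < Real.sqrt C := Real.sqrt_pos.mpr hCpos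
  intro ℓ h1 h2 σ σ' hσ hσ' j k hj hk hCj hCk hmom
  set sj : ℝ := Real.sqrt |(j : ℝ)| with hsj'
  set sk : ℝ := Real.sqrt |(k : ℝ)| with hsk'
  have hwA : m ≤ |w ℓ| := hmle ℓ h1 h2
  have hwB : |w ℓ| ≤ 6 * R := hwub ℓ h2
  have hsj : Real.sqrt C ≤ sj := Real.sqrt_le_sqrt hCj
  have hsk : Real.sqrt C ≤ sk := Real.sqrt_le_sqrt hCk
  have hsum : 2 * Real.sqrt C ≤ sj + sk := by linarith
  have hjk : |(j : ℝ) - (k : ℝ)| ≤ M := by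
    have h' : (j - k : ℤ) = -(∑ i, ℓ i * jb i) := by linarith [hmom]
    have h'' : ((j : ℝ) - k) = -((∑ i, ℓ i * jb i : ℤ) : ℝ) := by exact_mod_cast congrArg Int.cast h'
    rw [h'', abs_neg]
    exact hvub ℓ h2
  have hdiff : |sj - sk| ≤ m / 2 := by
    have hsqj : sj ^ 2 = |(j : ℝ)| := Real.sq_sqrt (abs_nonneg _)
    have hsqk : sk ^ 2 = |(k : ℝ)| := Real.sq_sqrt (abs_nonneg _)
    have he : |sj - sk| * (sj + sk) = abs (|(j : ℝ)| - |(k : ℝ)|) := by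
      rw [← hsqj, ← hsqk,
        show sj ^ 2 - sk ^ 2 = (sj - sk) * (sj + sk) from by ring, abs_mul,
        abs_of_nonneg (show (0 : ℝ) ≤ sj + sk from by positivity)]
    have h2' : abs (|(j : ℝ)| - |(k : ℝ)|) ≤ |(j : ℝ) - (k : ℝ)| :=
      abs_abs_sub_abs_le_abs_sub _ _
    have hMm : M ≤ m * Real.sqrt C := by
      have := mul_le_mul_of_nonneg_left hsC1 (le_of_lt hmpos)
      rw [mul_div_cancel₀ _ (ne_of_gt hmpos)] at this
      linarith [this]
    have hkey : |sj - sk| * (sj + sk) ≤ m * Real.sqrt C := by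
      rw [he]; linarith
    nlinarith [abs_nonneg (sj - sk),
      mul_le_mul_of_nonneg_left hsum (abs_nonneg (sj - sk))]
  have e₁ : w ℓ = ∑ i, (ℓ i : ℝ) * Real.sqrt |(jb i : ℝ)| := rfl
  rcases hσ with rfl | rfl <;> rcases hσ' with rfl | rfl
  · rw [show (∑ i, (ℓ i : ℝ) * Real.sqrt |(jb i : ℝ)|) + 1 * sj - 1 * sk
        = w ℓ + (sj - sk) from by rw [e₁]; ring]
    have tri : |w ℓ| ≤ |w ℓ + (sj - sk)| + |sj - sk| := by
      calc |w ℓ| = |(w ℓ + (sj - sk)) + (-(sj - sk))| := by ring_nf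
      _ ≤ |w ℓ + (sj - sk)| + |-(sj - sk)| := abs_add_le _ _
      _ = |w ℓ + (sj - sk)| + |sj - sk| := by rw [abs_neg]
    linarith
  · rw [show (∑ i, (ℓ i : ℝ) * Real.sqrt |(jb i : ℝ)|) + 1 * sj - (-1) * sk
        = w ℓ + (sj + sk) from by rw [e₁]; ring]
    have tri : sj + sk ≤ |w ℓ + (sj + sk)| + |w ℓ| := by
      calc sj + sk = |sj + sk| := (abs_of_nonneg (by positivity)).symm
      _ = |(w ℓ + (sj + sk)) + (-(w ℓ))| := by ring_nf
      _ ≤ |w ℓ + (sj + sk)| + |-(w ℓ)| := abs_add_le _ _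
      _ = |w ℓ + (sj + sk)| + |w ℓ| := by rw [abs_neg]
    linarith
  · rw [show (∑ i, (ℓ i : ℝ) * Real.sqrt |(jb i : ℝ)|) + (-1) * sj - 1 * sk
        = w ℓ - (sj + sk) from by rw [e₁]; ring]
    have tri : sj + sk ≤ |w ℓ - (sj + sk)| + |w ℓ| := by
      calc sj + sk = |sj + sk| := (abs_of_nonneg (by positivity)).symm
      _ = |(-(w ℓ - (sj + sk))) + (w ℓ)| := by ring_nf
      _ ≤ |-(w ℓ - (sj + sk))| + |w ℓ| := abs_add_le _ _
      _ = |w ℓ - (sj + sk)| + |w ℓ| := by rw [abs_neg]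
    linarith
  · rw [show (∑ i, (ℓ i : ℝ) * Real.sqrt |(jb i : ℝ)|) + (-1) * sj - (-1) * sk
        = w ℓ + (sk - sj) from by rw [e₁]; ring]
    have hdiff' : |sk - sj| ≤ m / 2 := by rw [abs_sub_comm]; exact hdiff
    have tri : |w ℓ| ≤ |w ℓ + (sk - sj)| + |sk - sj| := by
      calc |w ℓ| = |(w ℓ + (sk - sj)) + (-(sk - sj))| := by ring_nf
      _ ≤ |w ℓ + (sk - sj)| + |-(sk - sj)| := abs_add_le _ _
      _ = |w ℓ + (sk - sj)| + |sk - sj| := by rw [abs_neg]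
    linarith
end

section
/- For every nonzero integer λ and every integer b ≥ 1, the quadruple j₁ = −λb², j₂ = λ(b+1)², j₃ = λ(b²+b+1)², j₄ = λ(b+1)²b², with signs σ₁ = σ₃ = +1 and σ₂ = σ₄ = −1, is a non-trivial resonance of order 4: all jᵢ are nonzero, σ₁j₁+σ₂j₂+σ₃j₃+σ₄j₄ = 0, σ₁√|j₁|+σ₂√|j₂|+σ₃√|j₃|+σ₄√|j₄| = 0, and the multiset {j₁, j₃} differs from the multiset {j₂, j₄}. -/
/-- The Benjamin–Feir quadruples (Section 3): for every nonzero integer `λ`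
and every integer `b ≥ 1`, the quadruple `j₁ = -λb²`, `j₂ = λ(b+1)²`,
`j₃ = λ(b²+b+1)²`, `j₄ = λ(b+1)²b²` with signs `(+,-,+,-)` is a non-trivial
resonance of order 4. -/
theorem benjamin_feir_resonance (lam b j1 j2 j3 j4 : ℤ)
    (hlam : lam ≠ 0) (hb : 1 ≤ b)
    (hj1 : j1 = -lam * b ^ 2) (hj2 : j2 = lam * (b + 1) ^ 2)
    (hj3 : j3 = lam * (b ^ 2 + b + 1) ^ 2) (hj4 : j4 = lam * (b + 1) ^ 2 * b ^ 2) :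
    (j1 ≠ 0 ∧ j2 ≠ 0 ∧ j3 ≠ 0 ∧ j4 ≠ 0) ∧
      j1 - j2 + j3 - j4 = 0 ∧
      Real.sqrt |(j1 : ℝ)| - Real.sqrt |(j2 : ℝ)| + Real.sqrt |(j3 : ℝ)|
        - Real.sqrt |(j4 : ℝ)| = 0 ∧
      ({j1, j3} : Multiset ℤ) ≠ ({j2, j4} : Multiset ℤ) := by
  have hb0 : (0 : ℤ) < b := by omega
  have hb0' : (0 : ℝ) < (b : ℝ) := by exact_mod_cast hb0
  refine ⟨⟨?_, ?_, ?_, ?_⟩, ?_, ?_, ?_⟩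
  · subst hj1
    have hb' : b ≠ 0 := by omega
    simp [hlam, pow_ne_zero, hb']
  · subst hj2
    have : b + 1 ≠ 0 := by omega
    positivity
  · subst hj3
    have : b ^ 2 + b + 1 ≠ 0 := by nlinarith
    positivity
  · subst hj4
    have : b + 1 ≠ 0 := by omega
    positivity
  · subst hj1 hj2 hj3 hj4; ring
  · have key : ∀ c : ℤ, 0 < c →
        Real.sqrt |((lam * c ^ 2 : ℤ) : ℝ)| = Real.sqrt |(lam : ℝ)| * (c : ℝ) := by
      intro c hc
      have hc' : (0 : ℝ) ≤ (c : ℝ) := by exact_mod_cast hc.le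
      push_cast
      rw [abs_mul, Real.sqrt_mul (abs_nonneg _), abs_pow, abs_of_nonneg hc',
        Real.sqrt_sq hc']
    have h1 : Real.sqrt |(j1 : ℝ)| = Real.sqrt |(lam : ℝ)| * (b : ℝ) := by
      rw [hj1, show -lam * b ^ 2 = -(lam * b ^ 2) by ring, Int.cast_neg, abs_neg]
      exact key b hb0
    have h2 : Real.sqrt |(j2 : ℝ)| = Real.sqrt |(lam : ℝ)| * ((b : ℝ) + 1) := by
      rw [hj2]
      have := key (b + 1) (by omega)
      push_cast at this ⊢
      exact this
    have h3 : Real.sqrt |(j3 : ℝ)| = Real.sqrt |(lam : ℝ)| * ((b : ℝ) ^ 2 + b + 1) := by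
      rw [hj3]
      have := key (b ^ 2 + b + 1) (by nlinarith)
      push_cast at this ⊢
      exact this
    have h4 : Real.sqrt |(j4 : ℝ)| = Real.sqrt |(lam : ℝ)| * (((b : ℝ) + 1) * b) := by
      rw [hj4, show lam * (b + 1) ^ 2 * b ^ 2 = lam * ((b + 1) * b) ^ 2 by ring]
      have := key ((b + 1) * b) (by positivity)
      push_cast at this ⊢
      exact this
    rw [h1, h2, h3, h4]; ring
  · intro h
    have hmem : j1 ∈ ({j2, j4} : Multiset ℤ) := by
      rw [← h]; simp
    simp only [Multiset.insert_eq_cons, Multiset.mem_cons, Multiset.mem_singleton] at hmem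
    rcases hmem with h12 | h14
    · rw [hj1, hj2] at h12
      have : lam * (b ^ 2 + (b + 1) ^ 2) = 0 := by linarith
      have h2 : b ^ 2 + (b + 1) ^ 2 ≠ 0 := by nlinarith
      exact (mul_ne_zero hlam h2) this
    · rw [hj1, hj4] at h14
      have : lam * (b ^ 2 + (b + 1) ^ 2 * b ^ 2) = 0 := by linarith
      have h2 : b ^ 2 + (b + 1) ^ 2 * b ^ 2 ≠ 0 := by nlinarith
      exact (mul_ne_zero hlam h2) this
end
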